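/- Let J be a finite index set, and for each j ∈ J let R_j be an (m_j)×n real matrix and W_j an (m_j)×(m_j) real matrix such that ∑_{j∈J} R_jᵀ·W_j·R_j = I (the weights form a partition of unity). Assume in addition that for every j ∈ J, R_j·C = R_j·C·R_jᵀ·R_j, where C is an n×n real matrix. Then for every i ∈ J and every vector u ∈ ℝⁿ, R_i·(Cᵀ·u) = R_i·( ∑_{j∈J} R_jᵀ·(R_j·C·R_jᵀ)ᵀ·W_j·(R_j·u) ); that is, the application of the transposed change of basis can be computed from the local restricted matrices C_j = R_j·C·R_jᵀ, the local weights W_j, and the restricted vectors u^j = R_j·u. -/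

import Mathlib

open Matrix

/-!
Transposing the locality relation `R j * C = R j * C * (R j)ᵀ * R j` turns each local term
`(R j)ᵀ * (R j * C * (R j)ᵀ)ᵀ * W j * R j` into `Cᵀ * ((R j)ᵀ * W j * R j)`, so the partition of
unity sums them to `Cᵀ`; the theorem is this matrix identity applied to `u`.
-/

theorem transpose_mul_transpose_restrict_eq {m n α : Type*} [Fintype m] [Fintype n]
    [CommSemiring α] {R : Matrix m n α} {C : Matrix n n α}
    (hloc : R * C = R * C * Rᵀ * R) :
    Rᵀ * (R * C * Rᵀ)ᵀ = Cᵀ * Rᵀ := by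
  rw [← transpose_mul, ← hloc, transpose_mul]

theorem sum_transpose_mul_transpose_restrict_mul_eq_transpose
    {n : Type*} [Fintype n] [DecidableEq n] {J : Type*} [Fintype J]
    {m : J → Type*} [∀ j, Fintype (m j)] {α : Type*} [CommSemiring α]
    {R : ∀ j, Matrix (m j) n α} {W : ∀ j, Matrix (m j) (m j) α} {C : Matrix n n α}
    (hPU : ∑ j, (R j)ᵀ * W j * R j = 1) (hloc : ∀ j, R j * C = R j * C * (R j)ᵀ * R j) :
    ∑ j, (R j)ᵀ * (R j * C * (R j)ᵀ)ᵀ * W j * R j = Cᵀ := by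
  calc ∑ j, (R j)ᵀ * (R j * C * (R j)ᵀ)ᵀ * W j * R j
      = ∑ j, Cᵀ * ((R j)ᵀ * W j * R j) := by
        refine Finset.sum_congr rfl fun j _ => ?_
        rw [transpose_mul_transpose_restrict_eq (hloc j)]
        simp only [Matrix.mul_assoc]
    _ = Cᵀ := by rw [← Finset.mul_sum, hPU, Matrix.mul_one]

/-- with a partition-of-unity family of weights `W j` and locality of the
change of basis `C` w.r.t. every restriction `R j`, the restriction of the transposed
change of basis applied to `u` can be computed from local data. -/
theorem restriction_of_transposed_change_of_basis
    {n : Type*} [Fintype n] [DecidableEq n]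
    {J : Type*} [Fintype J]
    {m : J → Type*} [∀ j, Fintype (m j)]
    (R : ∀ j, Matrix (m j) n ℝ) (W : ∀ j, Matrix (m j) (m j) ℝ)
    (C : Matrix n n ℝ)
    (hPU : ∑ j, (R j)ᵀ * W j * R j = (1 : Matrix n n ℝ))
    (hloc : ∀ j, R j * C = R j * C * (R j)ᵀ * R j)
    (i : J) (u : n → ℝ) :
    (R i).mulVec (Cᵀ.mulVec u) =
      (R i).mulVec (∑ j, (R j)ᵀ.mulVec
        ((R j * C * (R j)ᵀ)ᵀ.mulVec ((W j).mulVec ((R j).mulVec u)))) := by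
  rw [← sum_transpose_mul_transpose_restrict_mul_eq_transpose hPU hloc, sum_mulVec]
  simp only [mulVec_mulVec, Matrix.mul_assoc]
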